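/- For N = 2 spins the GHZ state is reachable from the product state |++⟩ in finite time by a piecewise-constant global control: working with 4×4 complex matrices indexed by pairs of bits, there exist k ∈ ℕ, times t₁,…,t_k ≥ 0 and field values f₁,…,f_k ∈ ℝ such that (∏_{j=1}^{k} exp(i t_j • (H0 + f_j • H1))).mulVec ψ₀⁺ = ψ_d^(1), where ψ₀⁺ = (e₀₀ + e₀₁ + e₁₀ + e₁₁)/2 and ψ_d^(1) = (e₀₀ + e₁₁)/√2. -/

import Mathlib

open Matrix

/-- `Z n`: the Pauli-Z operator acting on site `n` of the two-spin chain. -/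
noncomputable def Zop (n : Fin 2) : Matrix (Fin 2 → Bool) (Fin 2 → Bool) ℂ :=
  Matrix.diagonal fun s => if s n = false then 1 else -1

/-- `X n`: the Pauli-X (bit flip) operator acting on site `n`. -/
noncomputable def Xop (n : Fin 2) : Matrix (Fin 2 → Bool) (Fin 2 → Bool) ℂ :=
  Matrix.of fun s t => if t = Function.update s n (!(s n)) then 1 else 0

/-- The Ising Hamiltonian for two spins, `H0 = Z₀ Z₁`. -/
noncomputable def IsingH0 : Matrix (Fin 2 → Bool) (Fin 2 → Bool) ℂ := Zop 0 * Zop 1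

/-- The global transverse-field Hamiltonian `H1 = X₀ + X₁`. -/
noncomputable def IsingH1 : Matrix (Fin 2 → Bool) (Fin 2 → Bool) ℂ := Xop 0 + Xop 1

/-- The standard basis vector at the bit string `s`. -/
noncomputable def e (s : Fin 2 → Bool) : (Fin 2 → Bool) → ℂ :=
  Pi.single s 1

/-- The product state `ψ₀⁺ = |++⟩ = (e₀₀ + e₀₁ + e₁₀ + e₁₁)/2`. -/
noncomputable def psiPlus : (Fin 2 → Bool) → ℂ :=
  (2 : ℂ)⁻¹ • ∑ s : Fin 2 → Bool, e s

/-- The GHZ state `ψ_d^(1) = (e₀₀ + e₁₁)/√2`. -/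
noncomputable def ghz1 : (Fin 2 → Bool) → ℂ :=
  ((Real.sqrt 2 : ℂ))⁻¹ • (e (fun _ => false) + e (fun _ => true))

/-!
On the span of the parity vectors `e₀₀ + e₁₁` and `e₀₁ + e₁₀`, which contains both `|++⟩` and
the GHZ state, `H0 + H1/2` acts as `[[1, 1], [1, -1]]` with eigenvalues `±√2`. Evolving `|++⟩`
for time `π/(2√2)` multiplies the two eigencomponents by `±i`, which sends it to `i • GHZ`;
evolving then under `H0` alone for time `3π/2` (the GHZ state has `H0`-eigenvalue `1`) removes
the phase `i`.
-/

open NormedSpace Complex Real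

theorem Matrix.pow_mulVec_of_mulVec_eq_smul {m R : Type*} [Fintype m] [DecidableEq m]
    [CommSemiring R] {M : Matrix m m R} {w : m → R} {μ : R} (h : M *ᵥ w = μ • w) (n : ℕ) :
    M ^ n *ᵥ w = μ ^ n • w := by
  induction n with
  | zero => simp
  | succ n ih => rw [pow_succ', ← mulVec_mulVec, ih, mulVec_smul, h, smul_smul, pow_succ]

open scoped Norms.Operator in
theorem Matrix.exp_mulVec_of_mulVec_eq_smul {m 𝕂 : Type*} [Fintype m] [DecidableEq m]
    [RCLike 𝕂] {M : Matrix m m 𝕂} {w : m → 𝕂} {μ : 𝕂} (h : M *ᵥ w = μ • w) :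
    exp M *ᵥ w = exp μ • w := by
  have hM := (exp_series_hasSum_exp' (𝕂 := 𝕂) M).map (mulVec.addMonoidHomLeft w)
    (continuous_id.matrix_mulVec continuous_const)
  have hμ := (exp_series_hasSum_exp' (𝕂 := 𝕂) μ).smul_const w
  refine hM.unique ?_
  convert hμ using 2 with n
  simp [mulVec.addMonoidHomLeft, smul_mulVec, pow_mulVec_of_mulVec_eq_smul h, smul_smul]

theorem ofReal_sqrt_two_sq : ((√2 : ℝ) : ℂ) ^ 2 = 2 := by
  norm_cast
  simp

theorem Zop_mulVec_e (n : Fin 2) (s : Fin 2 → Bool) :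
    Zop n *ᵥ e s = (if s n = false then 1 else -1 : ℂ) • e s := by
  rw [Zop, e, diagonal_mulVec_single, mul_one, ← Pi.single_smul', smul_eq_mul, mul_one]

theorem Xop_mulVec_e (n : Fin 2) (s : Fin 2 → Bool) :
    Xop n *ᵥ e s = e (Function.update s n (!s n)) := by
  ext t
  simp only [Xop, e, mulVec_single_one, col_apply, of_apply, Pi.single_apply]
  congr 1
  apply propext
  constructor <;> rintro rfl <;> simp

theorem IsingH0_mulVec_e (a b : Bool) :
    IsingH0 *ᵥ e ![a, b] = (if a = b then 1 else -1 : ℂ) • e ![a, b] := by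
  rw [IsingH0, ← mulVec_mulVec, Zop_mulVec_e, mulVec_smul, Zop_mulVec_e, smul_smul]
  congr 1
  cases a <;> cases b <;> norm_num

theorem IsingH1_mulVec_e (a b : Bool) :
    IsingH1 *ᵥ e ![a, b] = e ![!a, b] + e ![a, !b] := by
  rw [IsingH1, add_mulVec, Xop_mulVec_e, Xop_mulVec_e]
  congr 2 <;> ext i <;> fin_cases i <;> rfl

noncomputable def parityEven : (Fin 2 → Bool) → ℂ := e ![false, false] + e ![true, true]

noncomputable def parityOdd : (Fin 2 → Bool) → ℂ := e ![false, true] + e ![true, false]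

theorem IsingH0_mulVec_parityEven : IsingH0 *ᵥ parityEven = parityEven := by
  simp [parityEven, mulVec_add, IsingH0_mulVec_e]

theorem IsingH0_mulVec_parityOdd : IsingH0 *ᵥ parityOdd = -parityOdd := by
  simp only [parityOdd, mulVec_add, IsingH0_mulVec_e, Bool.false_eq_true, Bool.true_eq_false,
    if_false, neg_smul, one_smul, neg_add_rev]
  abel

theorem IsingH1_mulVec_parityEven : IsingH1 *ᵥ parityEven = (2 : ℂ) • parityOdd := by
  simp only [parityEven, parityOdd, mulVec_add, IsingH1_mulVec_e, Bool.not_false, Bool.not_true]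
  module

theorem IsingH1_mulVec_parityOdd : IsingH1 *ᵥ parityOdd = (2 : ℂ) • parityEven := by
  simp only [parityEven, parityOdd, mulVec_add, IsingH1_mulVec_e, Bool.not_false, Bool.not_true]
  module

theorem psiPlus_eq : psiPlus = (2 : ℂ)⁻¹ • (parityEven + parityOdd) := by
  rw [psiPlus, ← (finTwoArrowEquiv Bool).symm.sum_comp, Fintype.sum_prod_type, Fintype.sum_bool,
    Fintype.sum_bool, Fintype.sum_bool]
  simp only [finTwoArrowEquiv_symm_apply, parityEven, parityOdd]
  module

theorem ghz1_eq : ghz1 = (√2 : ℂ)⁻¹ • parityEven := by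
  rw [ghz1, parityEven]
  congr <;> decide

theorem IsingH0_mulVec_ghz1 : IsingH0 *ᵥ ghz1 = ghz1 := by
  rw [ghz1_eq, mulVec_smul, IsingH0_mulVec_parityEven]

-- `(1 + σ) / 4` and `1 / 4` are chosen so that the eigenvectors for `σ = ±√2` sum to `|++⟩`.
noncomputable def isingEigvec (σ : ℂ) : (Fin 2 → Bool) → ℂ :=
  ((1 + σ) / 4) • parityEven + (4 : ℂ)⁻¹ • parityOdd

theorem IsingH0_add_half_IsingH1_mulVec_isingEigvec {σ : ℂ} (hσ : σ ^ 2 = 2) :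
    (IsingH0 + (2⁻¹ : ℝ) • IsingH1) *ᵥ isingEigvec σ = σ • isingEigvec σ := by
  rw [← Complex.coe_smul]
  simp only [isingEigvec, add_mulVec, mulVec_add, mulVec_smul, smul_mulVec,
    IsingH0_mulVec_parityEven, IsingH0_mulVec_parityOdd, IsingH1_mulVec_parityEven,
    IsingH1_mulVec_parityOdd]
  linear_combination (norm := module) (-4⁻¹ : ℂ) • hσ • parityEven

theorem psiPlus_eq_isingEigvec_add : psiPlus = isingEigvec √2 + isingEigvec (-√2) := by
  rw [psiPlus_eq, isingEigvec, isingEigvec]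
  module

theorem isingEigvec_sub_eq_ghz1 : isingEigvec √2 - isingEigvec (-√2) = ghz1 := by
  rw [isingEigvec, isingEigvec, add_sub_add_right_eq_sub, ← sub_smul, ghz1_eq]
  congr 1
  have : (√2 : ℂ) ≠ 0 := by norm_cast; positivity
  field_simp
  linear_combination 2 * ofReal_sqrt_two_sq

theorem exp_IsingH0_add_half_IsingH1_mulVec_psiPlus :
    exp ((I * ((π / (2 * √2) : ℝ) : ℂ)) • (IsingH0 + (2⁻¹ : ℝ) • IsingH1)) *ᵥ psiPlus =
      I • ghz1 := by
  set c : ℂ := I * ((π / (2 * √2) : ℝ) : ℂ)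
  have hexp {σ : ℂ} (hσ : σ ^ 2 = 2) :
      exp (c • (IsingH0 + (2⁻¹ : ℝ) • IsingH1)) *ᵥ isingEigvec σ =
        Complex.exp (c * σ) • isingEigvec σ := by
    rw [Complex.exp_eq_exp_ℂ]
    refine exp_mulVec_of_mulVec_eq_smul ?_
    rw [smul_mulVec, IsingH0_add_half_IsingH1_mulVec_isingEigvec hσ, smul_smul]
  have hc : c * √2 = π / 2 * I := by
    simp only [c]
    push_cast
    field_simp
  rw [psiPlus_eq_isingEigvec_add, mulVec_add, hexp ofReal_sqrt_two_sq,
    hexp (by rw [neg_sq, ofReal_sqrt_two_sq]), mul_neg, hc, Complex.exp_neg,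
    exp_pi_div_two_mul_I, inv_I, neg_smul, ← sub_eq_add_neg, ← smul_sub, isingEigvec_sub_eq_ghz1]

theorem exp_IsingH0_mulVec_ghz1 :
    exp ((I * ((3 * π / 2 : ℝ) : ℂ)) • IsingH0) *ᵥ ghz1 = -I • ghz1 := by
  have hphase : Complex.exp (I * ((3 * π / 2 : ℝ) : ℂ)) = -I := by
    rw [show I * ((3 * π / 2 : ℝ) : ℂ) = π * I + π / 2 * I by push_cast; ring,
      Complex.exp_add, exp_pi_mul_I, exp_pi_div_two_mul_I, neg_one_mul]
  rw [← hphase, Complex.exp_eq_exp_ℂ]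
  exact exp_mulVec_of_mulVec_eq_smul (by rw [smul_mulVec, IsingH0_mulVec_ghz1])

/-- For `N = 2` spins the GHZ state is reachable from `|++⟩` in finite time by a
piecewise-constant global control: there exist nonnegative times `t_j` and field values
`f_j` such that `(∏_j exp(i t_j (H0 + f_j H1))).mulVec ψ₀⁺ = ψ_d^(1)`. -/
theorem ghz_reachable_two_spins :
    ∃ (k : ℕ) (t f : Fin k → ℝ), (∀ j, 0 ≤ t j) ∧
      ((List.ofFn fun j : Fin k =>
          NormedSpace.exp
            ((Complex.I * (t j : ℂ)) • (IsingH0 + (f j : ℝ) • IsingH1))).prod).mulVec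
        psiPlus = ghz1 := by
  refine ⟨2, ![3 * π / 2, π / (2 * √2)], ![0, 2⁻¹], ?_, ?_⟩
  · exact Fin.forall_fin_two.mpr
      ⟨(by positivity : (0 : ℝ) ≤ 3 * π / 2), (by positivity : (0 : ℝ) ≤ π / (2 * √2))⟩
  · simp only [List.ofFn_succ, List.ofFn_zero, List.prod_cons, List.prod_nil, mul_one,
      Fin.succ_zero_eq_one, Matrix.cons_val_zero, Matrix.cons_val_one, zero_smul, add_zero]
    rw [← mulVec_mulVec, exp_IsingH0_add_half_IsingH1_mulVec_psiPlus, mulVec_smul,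
      exp_IsingH0_mulVec_ghz1, smul_smul, mul_neg, I_mul_I, neg_neg, one_smul]
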